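/- Let X be a global solution of the inviscid dyadic model with X(0) ∈ H_+, i.e. X_n(0) < 0 for at most finitely many n. Then X is of class K: the function a(t) = sup_{n≥1} (−k_n X_{n+1}(t)) is locally integrable on [0,∞). More precisely, there exists n_0 such that a(t) ≤ k_{n_0} √E(0) for all t ≥ 0, where E(0) = Σ_{j≥1} X_j(0)^2. -/

import Mathlib

open MeasureTheory Set Filter Topology

/-- `X` is a solution of the inviscid dyadic model on the time set `D`
(typically `Set.Ico 0 T` or `Set.Ici 0`), with coefficients `k` bounded by `C * 2 ^ n`.
The components of the solution are `X 1, X 2, ...`; by convention `X 0 ≡ 0` and `k 0 = 0`. -/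
def IsDyadicSolutionOn (C : ℝ) (k : ℕ → ℝ) (X : ℕ → ℝ → ℝ) (D : Set ℝ) : Prop :=
  0 < C ∧ k 0 = 0 ∧
  (∀ n : ℕ, 1 ≤ n → 0 ≤ k n ∧ k n ≤ C * 2 ^ n) ∧
  (∀ t : ℝ, X 0 t = 0) ∧
  (∀ n : ℕ, 1 ≤ n → ∀ t ∈ D, HasDerivWithinAt (X n)
      (k (n - 1) * X (n - 1) t ^ 2 - k n * X n t * X (n + 1) t) D t) ∧
  (∀ t ∈ D, Summable fun j : ℕ => X (j + 1) t ^ 2)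

/-- The energy `E(t) = ∑_{j ≥ 1} X_j(t)^2`. -/
noncomputable def energy (X : ℕ → ℝ → ℝ) (t : ℝ) : ℝ :=
  ∑' j : ℕ, X (j + 1) t ^ 2

/-- The function `a(t) = sup_{n ≥ 1} (- k_n X_{n+1}(t))`. -/
noncomputable def classKfun (k : ℕ → ℝ) (X : ℕ → ℝ → ℝ) (t : ℝ) : ℝ :=
  ⨆ n : ℕ, -(k (n + 1) * X (n + 2) t)

/-- A solution is of class `K` if `a(t) = sup_{n ≥ 1} (- k_n X_{n+1}(t))` is locally
integrable on `[0,∞)`. -/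
def IsClassK (k : ℕ → ℝ) (X : ℕ → ℝ → ℝ) : Prop :=
  LocallyIntegrableOn (classKfun k X) (Set.Ici 0)

/-!
Each component satisfies `X_n' + k_n X_{n+1} X_n = k_{n-1} X_{n-1}^2 ≥ 0`, so by an integrating
factor a component that starts nonnegative stays nonnegative. Starting in `H₊`, all components
from some `n₀` on are therefore nonnegative for all time. The energy of the first `N` components
changes only through the flux `-2 k_N X_N^2 X_{N+1}` to the next one, which is `≤ 0` once
`N ≥ n₀`; hence every `X_m(t)^2` is bounded by `E(0)`. In `a(t)` the terms with `n + 1 ≥ n₀` are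
`≤ 0`, and the finitely many others are at most `max_{n ≤ n₀} k_n · √E(0)`, so `a` is bounded
(from below by its first term) and measurable, hence locally integrable.
-/

theorem nonneg_of_hasDerivWithinAt_add_mul_nonneg {a : ℝ} {x x' b : ℝ → ℝ}
    (hb : ContinuousOn b (Ici a)) (hx : ∀ t ∈ Ici a, HasDerivWithinAt x (x' t) (Ici a) t)
    (hx' : ∀ t ∈ Ici a, 0 ≤ x' t + b t * x t) (ha : 0 ≤ x a) :
    ∀ t ∈ Ici a, 0 ≤ x t := by
  -- extend `b` continuously to `ℝ`, so that it has a primitive `B`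
  have hβ : Continuous fun s => b (max a s) :=
    hb.comp_continuous (continuous_const.max continuous_id) fun s => le_max_left a s
  set B : ℝ → ℝ := fun u => ∫ s in a..u, b (max a s)
  have hY : ∀ t ∈ Ici a, HasDerivWithinAt (fun u => x u * Real.exp (B u))
      ((x' t + b t * x t) * Real.exp (B t)) (Ici a) t := by
    intro t ht
    have hB := (hβ.integral_hasStrictDerivAt a t).hasDerivAt.hasDerivWithinAt.exp (s := Ici a)
    refine ((hx t ht).mul hB).congr_deriv ?_
    rw [max_eq_right (mem_Ici.mp ht)]
    ring
  have hmono : MonotoneOn (fun u => x u * Real.exp (B u)) (Ici a) :=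
    monotoneOn_of_hasDerivWithinAt_nonneg (convex_Ici a)
      (fun t ht => (hY t ht).continuousWithinAt)
      (fun t ht => (hY t (interior_subset ht)).mono interior_subset)
      fun t ht => mul_nonneg (hx' t (interior_subset ht)) (Real.exp_pos _).le
  intro t ht
  have hxt : x a ≤ x t * Real.exp (B t) := by
    simpa [B] using hmono self_mem_Ici ht ht
  exact nonneg_of_mul_nonneg_left (ha.trans hxt) (Real.exp_pos _)

theorem MeasureTheory.locallyIntegrableOn_of_forall_norm_le {α E : Type*} [TopologicalSpace α]
    [MeasurableSpace α] [OpensMeasurableSpace α] [LocallyCompactSpace α] [NormedAddCommGroup E]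
    {μ : Measure α} [IsFiniteMeasureOnCompacts μ] {f : α → E} {s : Set α} (hs : IsClosed s)
    (hf : AEStronglyMeasurable f (μ.restrict s)) {M : ℝ} (hM : ∀ x ∈ s, ‖f x‖ ≤ M) :
    LocallyIntegrableOn f s μ := by
  rw [locallyIntegrableOn_iff hs.isLocallyClosed]
  intro K hKs hK
  have hle : μ.restrict K ≤ μ.restrict s := Measure.restrict_mono hKs le_rfl
  exact ⟨hf.mono_measure hle, HasFiniteIntegral.restrict_of_bounded M hK.measure_lt_top
    (ae_mono hle (ae_restrict_of_forall_mem hs.measurableSet hM))⟩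

namespace IsDyadicSolutionOn

variable {C : ℝ} {k : ℕ → ℝ} {X : ℕ → ℝ → ℝ} {D : Set ℝ}

theorem coeff_nonneg (hX : IsDyadicSolutionOn C k X D) (n : ℕ) : 0 ≤ k n := by
  rcases Nat.eq_zero_or_pos n with rfl | hn
  · exact hX.2.1.ge
  · exact (hX.2.2.1 n hn).1

theorem continuousOn (hX : IsDyadicSolutionOn C k X D) (n : ℕ) : ContinuousOn (X n) D := by
  rcases Nat.eq_zero_or_pos n with rfl | hn
  · exact continuousOn_const.congr fun t _ => hX.2.2.2.1 t
  · exact fun t ht => (hX.2.2.2.2.1 n hn t ht).continuousWithinAt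

theorem hasDerivWithinAt_partial_energy (hX : IsDyadicSolutionOn C k X D) (N : ℕ) {t : ℝ}
    (ht : t ∈ D) :
    HasDerivWithinAt (fun s => ∑ j ∈ Finset.range N, X (j + 1) s ^ 2)
      (-(2 * k N * X N t ^ 2 * X (N + 1) t)) D t := by
  have hsq : ∀ j ∈ Finset.range N, HasDerivWithinAt (fun s => X (j + 1) s ^ 2)
      (2 * k j * X j t ^ 2 * X (j + 1) t - 2 * k (j + 1) * X (j + 1) t ^ 2 * X (j + 2) t) D t := by
    intro j _
    refine ((hX.2.2.2.2.1 (j + 1) (Nat.le_add_left 1 j) t ht).fun_pow 2).congr_deriv ?_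
    simp only [Nat.add_sub_cancel]
    push_cast
    ring
  refine (HasDerivWithinAt.fun_sum hsq).congr_deriv ?_
  rw [Finset.sum_range_sub' (fun j => 2 * k j * X j t ^ 2 * X (j + 1) t), hX.2.1]
  ring

theorem nonneg_of_nonneg_initial (hX : IsDyadicSolutionOn C k X (Ici 0)) {n : ℕ} (hn : 1 ≤ n)
    (h0 : 0 ≤ X n 0) : ∀ t ∈ Ici (0 : ℝ), 0 ≤ X n t :=
  nonneg_of_hasDerivWithinAt_add_mul_nonneg (b := fun s => k n * X (n + 1) s)
    (continuousOn_const.mul (hX.continuousOn (n + 1))) (hX.2.2.2.2.1 n hn)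
    (fun t _ => by linarith [mul_nonneg (hX.coeff_nonneg (n - 1)) (sq_nonneg (X (n - 1) t))]) h0

theorem exists_forall_ge_nonneg (hX : IsDyadicSolutionOn C k X (Ici 0))
    (hfin : {n : ℕ | X n 0 < 0}.Finite) :
    ∃ n₀, ∀ n ≥ n₀, ∀ t ∈ Ici (0 : ℝ), 0 ≤ X n t := by
  obtain ⟨n₁, hn₁⟩ := hfin.bddAbove
  refine ⟨n₁ + 1, fun n hn => hX.nonneg_of_nonneg_initial (by omega) ?_⟩
  by_contra hneg
  have := hn₁ (not_le.mp hneg)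
  omega

theorem sq_le_energy_zero (hX : IsDyadicSolutionOn C k X (Ici 0)) {n₀ : ℕ}
    (hpos : ∀ n ≥ n₀, ∀ t ∈ Ici (0 : ℝ), 0 ≤ X n t) {m : ℕ} (hm : 1 ≤ m) {t : ℝ}
    (ht : t ∈ Ici 0) : X m t ^ 2 ≤ energy X 0 := by
  set N := max m n₀
  have hanti : AntitoneOn (fun s => ∑ j ∈ Finset.range N, X (j + 1) s ^ 2) (Ici 0) :=
    antitoneOn_of_hasDerivWithinAt_nonpos (convex_Ici 0)
      (fun s hs => (hX.hasDerivWithinAt_partial_energy N hs).continuousWithinAt)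
      (fun s hs => (hX.hasDerivWithinAt_partial_energy N (interior_subset hs)).mono
        interior_subset)
      fun s hs => by
        have hflux : 0 ≤ X (N + 1) s := hpos _ (by omega) s (interior_subset hs)
        linarith [mul_nonneg (mul_nonneg (hX.coeff_nonneg N) (sq_nonneg (X N s))) hflux]
  calc X m t ^ 2 = X (m - 1 + 1) t ^ 2 := by rw [Nat.sub_add_cancel hm]
    _ ≤ ∑ j ∈ Finset.range N, X (j + 1) t ^ 2 :=
      Finset.single_le_sum (f := fun j => X (j + 1) t ^ 2) (fun _ _ => sq_nonneg _)
        (Finset.mem_range.mpr (by omega))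
    _ ≤ ∑ j ∈ Finset.range N, X (j + 1) 0 ^ 2 := hanti self_mem_Ici ht ht
    _ ≤ energy X 0 :=
      (hX.2.2.2.2.2 0 self_mem_Ici).sum_le_tsum _ fun _ _ => sq_nonneg _

theorem exists_forall_neg_mul_le (hX : IsDyadicSolutionOn C k X (Ici 0)) {n₀ : ℕ}
    (hpos : ∀ n ≥ n₀, ∀ t ∈ Ici (0 : ℝ), 0 ≤ X n t) :
    ∃ m, ∀ t ∈ Ici (0 : ℝ), ∀ n : ℕ,
      -(k (n + 1) * X (n + 2) t) ≤ k m * Real.sqrt (energy X 0) := by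
  obtain ⟨m, -, hm⟩ := (Finset.range (n₀ + 1)).exists_max_image k ⟨0, by simp⟩
  refine ⟨m, fun t ht n => ?_⟩
  have hkm : 0 ≤ k m * Real.sqrt (energy X 0) :=
    mul_nonneg (hX.coeff_nonneg m) (Real.sqrt_nonneg _)
  rcases le_or_gt n₀ (n + 2) with hn | hn
  · linarith [mul_nonneg (hX.coeff_nonneg (n + 1)) (hpos _ hn t ht)]
  · have hX' : -X (n + 2) t ≤ Real.sqrt (energy X 0) :=
      (neg_le_abs _).trans (Real.abs_le_sqrt (hX.sq_le_energy_zero hpos (by omega) ht))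
    calc -(k (n + 1) * X (n + 2) t) = k (n + 1) * -X (n + 2) t := by ring
      _ ≤ k (n + 1) * Real.sqrt (energy X 0) :=
        mul_le_mul_of_nonneg_left hX' (hX.coeff_nonneg _)
      _ ≤ k m * Real.sqrt (energy X 0) :=
        mul_le_mul_of_nonneg_right (hm _ (Finset.mem_range.mpr (by omega))) (Real.sqrt_nonneg _)

theorem exists_classKfun_mem_Icc (hX : IsDyadicSolutionOn C k X (Ici 0)) {n₀ : ℕ}
    (hpos : ∀ n ≥ n₀, ∀ t ∈ Ici (0 : ℝ), 0 ≤ X n t) :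
    ∃ m, ∀ t ∈ Ici (0 : ℝ), classKfun k X t ∈
      Icc (-(k 1 * Real.sqrt (energy X 0))) (k m * Real.sqrt (energy X 0)) := by
  obtain ⟨m, hm⟩ := hX.exists_forall_neg_mul_le hpos
  refine ⟨m, fun t ht => ⟨?_, ciSup_le (hm t ht)⟩⟩
  have hX2 : X 2 t ≤ Real.sqrt (energy X 0) :=
    (le_abs_self _).trans (Real.abs_le_sqrt (hX.sq_le_energy_zero hpos (by norm_num) ht))
  calc -(k 1 * Real.sqrt (energy X 0)) ≤ -(k 1 * X 2 t) :=
        neg_le_neg (mul_le_mul_of_nonneg_left hX2 (hX.coeff_nonneg 1))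
    _ ≤ classKfun k X t := le_ciSup ⟨_, forall_mem_range.mpr (hm t ht)⟩ 0

theorem aestronglyMeasurable_classKfun (hX : IsDyadicSolutionOn C k X D) (hD : MeasurableSet D) :
    AEStronglyMeasurable (classKfun k X) (volume.restrict D) :=
  (AEMeasurable.iSup fun n =>
    ((continuousOn_const.mul (hX.continuousOn (n + 2))).neg.aemeasurable hD)).aestronglyMeasurable

end IsDyadicSolutionOn

/-- every global solution starting in `H₊` is of class `K`; moreover
there exists `n₀` with `a(t) ≤ k_{n₀} √(E(0))` for all `t ≥ 0`. -/
theorem Hplus_initial_implies_classK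
    (C : ℝ) (k : ℕ → ℝ) (X : ℕ → ℝ → ℝ)
    (hX : IsDyadicSolutionOn C k X (Set.Ici 0))
    (hfin : {n : ℕ | X n 0 < 0}.Finite) :
    IsClassK k X ∧
    ∃ n₀ : ℕ, ∀ t ∈ Set.Ici (0 : ℝ),
      classKfun k X t ≤ k n₀ * Real.sqrt (energy X 0) := by
  obtain ⟨n₀, hpos⟩ := hX.exists_forall_ge_nonneg hfin
  obtain ⟨m, hbound⟩ := hX.exists_classKfun_mem_Icc hpos
  refine ⟨locallyIntegrableOn_of_forall_norm_le isClosed_Ici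
    (hX.aestronglyMeasurable_classKfun measurableSet_Ici)
    (M := k m * Real.sqrt (energy X 0) + k 1 * Real.sqrt (energy X 0)) fun t ht => ?_,
    m, fun t ht => (hbound t ht).2⟩
  have hk1 : 0 ≤ k 1 * Real.sqrt (energy X 0) :=
    mul_nonneg (hX.coeff_nonneg 1) (Real.sqrt_nonneg _)
  have hkm : 0 ≤ k m * Real.sqrt (energy X 0) :=
    mul_nonneg (hX.coeff_nonneg m) (Real.sqrt_nonneg _)
  rw [Real.norm_eq_abs, abs_le]
  constructor <;> linarith [(hbound t ht).1, (hbound t ht).2]
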